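/- Optimality criterium: for a stopping time θ* ∈ T_S with E[φ(θ*)] < ∞, the following are equivalent: (1) v(S) = E[φ(θ*)|F_S] a.s.; (2) v(θ*) = φ(θ*) a.s. and E[v(S)] = E[v(θ*)]; (3) E[v(S)] = E[φ(θ*)]. -/

import Mathlib

open MeasureTheory Filter ENNReal

variable {Ω : Type*}

/-- A stopping time of the filtration `ℱ` with values in `[0, T]` (an element of `T_0`). -/
def IsStoppingTimeIn {m : MeasurableSpace Ω} (ℱ : Filtration ℝ m) (T : ℝ)
    (τ : Ω → ℝ) : Prop :=
  IsStoppingTime ℱ (fun ω => (τ ω : WithTop ℝ)) ∧ ∀ ω, τ ω ∈ Set.Icc (0 : ℝ) T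

/-- `θ` belongs to `T_S`: a `[0,T]`-valued stopping time with `θ ≥ S` a.s. -/
def MemTS {m : MeasurableSpace Ω} (ℱ : Filtration ℝ m) (μ : Measure Ω) (T : ℝ)
    (S θ : Ω → ℝ) : Prop :=
  IsStoppingTimeIn ℱ T θ ∧ ∀ᵐ ω ∂μ, S ω ≤ θ ω

/-- An admissible family of nonnegative random variables indexed by stopping times:
`φ(τ)` is `F_τ`-measurable and `φ(τ) = φ(τ')` a.s. on `{τ = τ'}`. -/
def Admissible {m : MeasurableSpace Ω} (ℱ : Filtration ℝ m) (μ : Measure Ω) (T : ℝ)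
    (φ : (Ω → ℝ) → Ω → ℝ) : Prop :=
  (∀ τ (hτ : IsStoppingTimeIn ℱ T τ),
      Measurable[hτ.1.measurableSpace] (φ τ) ∧ ∀ ω, 0 ≤ φ τ ω) ∧
  (∀ τ τ', IsStoppingTimeIn ℱ T τ → IsStoppingTimeIn ℱ T τ' →
      ∀ᵐ ω ∂μ, τ ω = τ' ω → φ τ ω = φ τ' ω)

/-- `v` is an essential supremum of the family of random variables `s`:
`v` dominates every member a.s., and is a.s. below any other a.s. upper bound. -/
def IsEssSupOf {m : MeasurableSpace Ω} (μ : Measure Ω) (s : Set (Ω → ℝ))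
    (v : Ω → ℝ) : Prop :=
  (∀ f ∈ s, f ≤ᵐ[μ] v) ∧ ∀ g : Ω → ℝ, (∀ f ∈ s, f ≤ᵐ[μ] g) → v ≤ᵐ[μ] g

/-- The family `{E[φ(θ) | F_S] : θ ∈ T_S}`. -/
def valueSet {m : MeasurableSpace Ω} (ℱ : Filtration ℝ m) (μ : Measure Ω) (T : ℝ)
    (φ : (Ω → ℝ) → Ω → ℝ) (S : Ω → ℝ) (hS : IsStoppingTime ℱ (fun ω => (S ω : WithTop ℝ))) : Set (Ω → ℝ) :=
  {f | ∃ θ, MemTS ℱ μ T S θ ∧ f = μ[φ θ | hS.measurableSpace]}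

/-- `v` is the value function family of the reward family `φ`:
`v(S) = ess sup_{θ ∈ T_S} E[φ(θ) | F_S]`, chosen `F_S`-measurable. -/
def IsValueFam {m : MeasurableSpace Ω} (ℱ : Filtration ℝ m) (μ : Measure Ω) (T : ℝ)
    (φ v : (Ω → ℝ) → Ω → ℝ) : Prop :=
  ∀ S (hS : IsStoppingTimeIn ℱ T S),
    Measurable[hS.1.measurableSpace] (v S) ∧
    IsEssSupOf μ (valueSet ℱ μ T φ S hS.1) (v S)

/-- Right continuity in expectation along stopping times. -/
def RCEFam {m : MeasurableSpace Ω} (ℱ : Filtration ℝ m) (μ : Measure Ω) (T : ℝ)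
    (φ : (Ω → ℝ) → Ω → ℝ) : Prop :=
  ∀ θ (θn : ℕ → Ω → ℝ), IsStoppingTimeIn ℱ T θ →
    (∀ n, IsStoppingTimeIn ℱ T (θn n)) →
    (∀ᵐ ω ∂μ, Antitone (fun n => θn n ω) ∧
      Tendsto (fun n => θn n ω) atTop (nhds (θ ω))) →
    Tendsto (fun n => ∫ ω, φ (θn n) ω ∂μ) atTop (nhds (∫ ω, φ θ ω ∂μ))

/-- Left continuity in expectation along stopping times. -/
def LCEFam {m : MeasurableSpace Ω} (ℱ : Filtration ℝ m) (μ : Measure Ω) (T : ℝ)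
    (φ : (Ω → ℝ) → Ω → ℝ) : Prop :=
  ∀ θ (θn : ℕ → Ω → ℝ), IsStoppingTimeIn ℱ T θ →
    (∀ n, IsStoppingTimeIn ℱ T (θn n)) →
    (∀ᵐ ω ∂μ, Monotone (fun n => θn n ω) ∧
      Tendsto (fun n => θn n ω) atTop (nhds (θ ω))) →
    Tendsto (fun n => ∫ ω, φ (θn n) ω ∂μ) atTop (nhds (∫ ω, φ θ ω ∂μ))

/-- The integrability condition `v(0) = sup_{θ ∈ T_0} E[φ(θ)] < ∞`. -/
def BddReward {m : MeasurableSpace Ω} (ℱ : Filtration ℝ m) (μ : Measure Ω) (T : ℝ)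
    (φ : (Ω → ℝ) → Ω → ℝ) : Prop :=
  (⨆ θ : {θ : Ω → ℝ // IsStoppingTimeIn ℱ T θ},
      ∫⁻ ω, ENNReal.ofReal (φ θ.1 ω) ∂μ) < ⊤

/-- A supermartingale system: an admissible family `h` with
`E[h(θ) | F_{θ'}] ≤ h(θ')` a.s. whenever `θ ≥ θ'` a.s. -/
def SupermartSys {m : MeasurableSpace Ω} (ℱ : Filtration ℝ m) (μ : Measure Ω) (T : ℝ)
    (h : (Ω → ℝ) → Ω → ℝ) : Prop :=
  Admissible ℱ μ T h ∧
  ∀ θ θ' (hθ : IsStoppingTimeIn ℱ T θ) (hθ' : IsStoppingTimeIn ℱ T θ'),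
    (∀ᵐ ω ∂μ, θ' ω ≤ θ ω) →
    μ[h θ | hθ'.1.measurableSpace] ≤ᵐ[μ] h θ'

/-- `F_0` contains only sets of probability `0` or `1`. -/
def TrivialF0 {m : MeasurableSpace Ω} (ℱ : Filtration ℝ m) (μ : Measure Ω) : Prop :=
  ∀ A : Set Ω, MeasurableSet[ℱ 0] A → μ A = 0 ∨ μ A = 1

/-!
Since `E[φ(θ*) | F_S] ≤ v(S)` and `φ(θ*) ≤ v(θ*)` a.s., each assertion is an equality of
integrals of two a.s. ordered integrable variables, once `v` is known to be integrable and to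
satisfy `E[v(θ*)] ≤ E[v(S)]`. Both facts come from the upward directedness of
`{E[φ(θ) | F_R] : θ ∈ T_R}` (paste two stopping times along the `F_R`-set where one does better):
`v(R)` is then the a.s. increasing limit of some `E[φ(θₙ) | F_R]`, so by monotone convergence
`E[v(R)] = lim E[φ(θₙ)]`, which is at most `E[v(S)]` when `R ∈ T_S`, and at most the constant
`v(0)` since `F_0` is trivial.
-/

open Topology

section GeneralMeasureTheory

variable {m : MeasurableSpace Ω} {μ : Measure Ω}

theorem exists_ae_eq_const_of_measurable_of_trivial [IsProbabilityMeasure μ]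
    {m₀ : MeasurableSpace Ω} (hm₀ : m₀ ≤ m)
    (htriv : ∀ A : Set Ω, MeasurableSet[m₀] A → μ A = 0 ∨ μ A = 1)
    {f : Ω → ℝ} (hf : Measurable[m₀] f) : ∃ c : ℝ, f =ᵐ[μ] fun _ => c := by
  refine exists_eventuallyEq_const_of_forall_separating MeasurableSet fun U hU => ?_
  rcases htriv _ (hf hU) with h | h
  · exact Or.inr (measure_eq_zero_iff_ae_notMem.1 h)
  · exact Or.inl ((mem_ae_iff_prob_eq_one (hm₀ _ (hf hU))).2 h)

theorem integrable_of_tendsto_of_integral_le {f : ℕ → Ω → ℝ} {F : Ω → ℝ} {C : ℝ}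
    (hf : ∀ n, Integrable (f n) μ) (hf_nonneg : ∀ n, 0 ≤ᵐ[μ] f n)
    (h_tendsto : ∀ᵐ ω ∂μ, Tendsto (fun n => f n ω) atTop (𝓝 (F ω)))
    (h_bound : ∀ n, ∫ ω, f n ω ∂μ ≤ C) : Integrable F μ := by
  have hF_nonneg : 0 ≤ᵐ[μ] F := by
    filter_upwards [h_tendsto, ae_all_iff.2 hf_nonneg] with ω hω h0
    exact ge_of_tendsto' hω h0
  refine ⟨aestronglyMeasurable_of_tendsto_ae _ (fun n => (hf n).1) h_tendsto,
    (hasFiniteIntegral_iff_ofReal hF_nonneg).2 ?_⟩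
  calc ∫⁻ ω, ENNReal.ofReal (F ω) ∂μ
      = ∫⁻ ω, liminf (fun n => ENNReal.ofReal (f n ω)) atTop ∂μ := by
        refine lintegral_congr_ae ?_
        filter_upwards [h_tendsto] with ω hω
        exact ((ENNReal.continuous_ofReal.tendsto _).comp hω).liminf_eq.symm
    _ ≤ liminf (fun n => ∫⁻ ω, ENNReal.ofReal (f n ω) ∂μ) atTop :=
        lintegral_liminf_le' fun n => (hf n).aemeasurable.ennreal_ofReal
    _ ≤ ENNReal.ofReal C := by
        refine liminf_le_of_frequently_le' (Frequently.of_forall fun n => ?_)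
        rw [← ofReal_integral_eq_lintegral_ofReal (hf n) (hf_nonneg n)]
        exact ENNReal.ofReal_le_ofReal (h_bound n)
    _ < ⊤ := ofReal_lt_top

theorem condExp_piecewise {m₀ : MeasurableSpace Ω} (hm₀ : m₀ ≤ m) {A : Set Ω}
    [DecidablePred (· ∈ A)] (hA : MeasurableSet[m₀] A) {f g : Ω → ℝ} (hf : Integrable f μ)
    (hg : Integrable g μ) :
    μ[A.piecewise f g | m₀] =ᵐ[μ] A.piecewise (μ[f | m₀]) (μ[g | m₀]) := by
  rw [← Set.indicator_add_compl_eq_piecewise, ← Set.indicator_add_compl_eq_piecewise]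
  exact (condExp_add (hf.indicator (hm₀ _ hA)) (hg.indicator (hm₀ _ hA.compl)) m₀).trans
    ((condExp_indicator hf hA).add (condExp_indicator hg hA.compl))

end GeneralMeasureTheory

theorem Real.norm_arctan_le (x : ℝ) : ‖Real.arctan x‖ ≤ Real.pi / 2 := by
  rw [Real.norm_eq_abs, abs_le]
  exact ⟨(Real.neg_pi_div_two_lt_arctan x).le, (Real.arctan_lt_pi_div_two x).le⟩

section EssSup

variable {m : MeasurableSpace Ω} {μ : Measure Ω} [IsFiniteMeasure μ]

noncomputable def arctanMean (μ : Measure Ω) (f : Ω → ℝ) : ℝ :=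
  ∫ ω, Real.arctan (f ω) ∂μ

theorem bddAbove_image_arctanMean (s : Set (Ω → ℝ)) : BddAbove (arctanMean μ '' s) := by
  refine ⟨Real.pi / 2 * μ.real Set.univ, ?_⟩
  rintro _ ⟨f, -, rfl⟩
  exact (le_abs_self _).trans
    (norm_integral_le_of_norm_le_const (ae_of_all _ fun ω => Real.norm_arctan_le (f ω)))

theorem integrable_arctan_comp {f : Ω → ℝ} (hf : AEStronglyMeasurable f μ) :
    Integrable (fun ω => Real.arctan (f ω)) μ :=
  (integrable_const (Real.pi / 2)).mono' (Real.continuous_arctan.comp_aestronglyMeasurable hf)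
    (ae_of_all _ fun ω => Real.norm_arctan_le (f ω))

theorem arctanMean_mono {f g : Ω → ℝ} (hf : AEStronglyMeasurable f μ)
    (hg : AEStronglyMeasurable g μ) (hfg : f ≤ᵐ[μ] g) : arctanMean μ f ≤ arctanMean μ g :=
  integral_mono_ae (integrable_arctan_comp hf) (integrable_arctan_comp hg)
    (hfg.mono fun _ h => Real.arctan_strictMono.monotone h)

theorem tendsto_arctanMean {f : ℕ → Ω → ℝ} {g : Ω → ℝ}
    (hf : ∀ n, AEStronglyMeasurable (f n) μ)
    (h : ∀ᵐ ω ∂μ, Tendsto (fun n => f n ω) atTop (𝓝 (g ω))) :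
    Tendsto (fun n => arctanMean μ (f n)) atTop (𝓝 (arctanMean μ g)) :=
  tendsto_integral_of_dominated_convergence (fun _ => Real.pi / 2)
    (fun n => (integrable_arctan_comp (hf n)).1) (integrable_const _)
    (fun n => ae_of_all _ fun ω => Real.norm_arctan_le (f n ω))
    (h.mono fun _ hω => (Real.continuous_arctan.tendsto _).comp hω)

theorem ae_le_of_arctanMean_sup_le {f g : Ω → ℝ} (hf : AEStronglyMeasurable f μ)
    (hg : AEStronglyMeasurable g μ) (h : arctanMean μ (f ⊔ g) ≤ arctanMean μ g) : f ≤ᵐ[μ] g := by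
  have h_le : (fun ω => Real.arctan (g ω)) ≤ᵐ[μ] fun ω => Real.arctan ((f ⊔ g) ω) :=
    ae_of_all _ fun ω => Real.arctan_strictMono.monotone le_sup_right
  have h_eq := (integral_eq_iff_of_ae_le (integrable_arctan_comp hg)
    (integrable_arctan_comp (hf.sup hg)) h_le).1 (le_antisymm (arctanMean_mono hg (hf.sup hg)
      (ae_of_all _ fun _ => le_sup_right)) h)
  filter_upwards [h_eq] with ω hω
  exact sup_eq_right.1 (Real.arctan_injective hω).symm

variable {s : Set (Ω → ℝ)}

theorem exists_seq_arctanMean_tendsto_sSup (hne : s.Nonempty)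
    (hmeas : ∀ f ∈ s, AEStronglyMeasurable f μ)
    (hdir : ∀ f ∈ s, ∀ g ∈ s, ∃ h ∈ s, h =ᵐ[μ] f ⊔ g) :
    ∃ f : ℕ → Ω → ℝ, (∀ n, f n ∈ s) ∧ (∀ n, f n ≤ᵐ[μ] f (n + 1)) ∧
      Tendsto (fun n => arctanMean μ (f n)) atTop (𝓝 (sSup (arctanMean μ '' s))) := by
  set M := sSup (arctanMean μ '' s)
  have h_approx : ∀ k : ℕ, ∃ g ∈ s, M - 1 / ((k : ℝ) + 1) < arctanMean μ g := fun k => by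
    obtain ⟨_, ⟨g, hg, rfl⟩, hlt⟩ := exists_lt_of_lt_csSup (hne.image _)
      (sub_lt_self M (by positivity : (0 : ℝ) < 1 / ((k : ℝ) + 1)))
    exact ⟨g, hg, hlt⟩
  choose g hg_mem hg_lt using h_approx
  choose! up hup_mem hup_eq using hdir
  let f : ℕ → Ω → ℝ := fun n => Nat.rec (g 0) (fun k fk => up fk (g (k + 1))) n
  have hf_mem : ∀ n, f n ∈ s := fun n => by
    induction n with
    | zero => exact hg_mem 0
    | succ k ih => exact hup_mem _ ih _ (hg_mem (k + 1))
  have hf_succ : ∀ n, f (n + 1) =ᵐ[μ] f n ⊔ g (n + 1) := fun n =>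
    hup_eq _ (hf_mem n) _ (hg_mem (n + 1))
  have hg_le : ∀ n, g n ≤ᵐ[μ] f n := fun n => by
    cases n with
    | zero => exact EventuallyLE.refl _ _
    | succ k =>
      exact EventuallyLE.trans_eq (ae_of_all _ fun _ => le_sup_right) (hf_succ k).symm
  refine ⟨f, hf_mem, fun n =>
    EventuallyLE.trans_eq (ae_of_all _ fun _ => le_sup_left) (hf_succ n).symm, ?_⟩
  refine tendsto_of_tendsto_of_tendsto_of_le_of_le
    (by simpa using (tendsto_const_nhds (x := M)).sub tendsto_one_div_add_atTop_nhds_zero_nat)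
    tendsto_const_nhds (fun n => (hg_lt n).le.trans ?_)
    (fun n => le_csSup (bddAbove_image_arctanMean s) ⟨f n, hf_mem n, rfl⟩)
  exact arctanMean_mono (hmeas _ (hg_mem n)) (hmeas _ (hf_mem n)) (hg_le n)

/-- Take a sequence maximising the bounded increasing functional `arctanMean`. -/
theorem IsEssSupOf.exists_seq_tendsto {v : Ω → ℝ} (hv : IsEssSupOf μ s v) (hne : s.Nonempty)
    (hmeas : ∀ f ∈ s, AEStronglyMeasurable f μ)
    (hdir : ∀ f ∈ s, ∀ g ∈ s, ∃ h ∈ s, h =ᵐ[μ] f ⊔ g) :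
    ∃ f : ℕ → Ω → ℝ, (∀ n, f n ∈ s) ∧ (∀ᵐ ω ∂μ, Monotone fun n => f n ω) ∧
      ∀ᵐ ω ∂μ, Tendsto (fun n => f n ω) atTop (𝓝 (v ω)) := by
  obtain ⟨f, hf_mem, hf_succ, hf_lim⟩ := exists_seq_arctanMean_tendsto_sSup hne hmeas hdir
  have hf_meas : ∀ n, AEStronglyMeasurable (f n) μ := fun n => hmeas _ (hf_mem n)
  have hf_mono : ∀ᵐ ω ∂μ, Monotone fun n => f n ω := by
    filter_upwards [ae_all_iff.2 hf_succ] with ω hω using monotone_nat_of_le_succ hω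
  set V : Ω → ℝ := fun ω => ⨆ n, f n ω
  have hV : ∀ᵐ ω ∂μ, Tendsto (fun n => f n ω) atTop (𝓝 (V ω)) ∧ V ω ≤ v ω := by
    filter_upwards [hf_mono, ae_all_iff.2 fun n => hv.1 _ (hf_mem n)] with ω hmono hle
    exact ⟨tendsto_atTop_ciSup hmono ⟨v ω, Set.forall_mem_range.2 hle⟩, ciSup_le hle⟩
  have hV_meas : AEStronglyMeasurable V μ :=
    aestronglyMeasurable_of_tendsto_ae _ hf_meas (hV.mono fun _ h => h.1)
  have hV_max : arctanMean μ V = sSup (arctanMean μ '' s) :=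
    tendsto_nhds_unique (tendsto_arctanMean hf_meas (hV.mono fun _ h => h.1)) hf_lim
  have hV_ub : ∀ g ∈ s, g ≤ᵐ[μ] V := fun g hg => by
    refine ae_le_of_arctanMean_sup_le (hmeas g hg) hV_meas (hV_max ▸ le_of_tendsto
      (tendsto_arctanMean (fun n => (hmeas g hg).sup (hf_meas n))
        (hV.mono fun _ h => tendsto_const_nhds.max h.1)) (Eventually.of_forall fun n => ?_))
    obtain ⟨h, hh, h_eq⟩ := hdir g hg (f n) (hf_mem n)
    calc arctanMean μ (g ⊔ f n) = arctanMean μ h :=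
          integral_congr_ae (h_eq.symm.fun_comp Real.arctan)
      _ ≤ sSup (arctanMean μ '' s) := le_csSup (bddAbove_image_arctanMean s) ⟨h, hh, rfl⟩
  refine ⟨f, hf_mem, hf_mono, ?_⟩
  filter_upwards [hV, hv.2 V hV_ub] with ω ⟨hlim, hVv⟩ hvV
  rwa [le_antisymm hVv hvV] at hlim

end EssSup

section StoppingTimes

variable {m : MeasurableSpace Ω} {ℱ : Filtration ℝ m} {μ : Measure Ω} {T : ℝ}
  {R S θ θ' : Ω → ℝ}

theorem MemTS.refl (hθ : IsStoppingTimeIn ℱ T θ) : MemTS ℱ μ T θ θ :=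
  ⟨hθ, ae_of_all _ fun _ => le_rfl⟩

theorem MemTS.trans (hR : MemTS ℱ μ T S R) (hθ : MemTS ℱ μ T R θ) : MemTS ℱ μ T S θ :=
  ⟨hθ.1, by filter_upwards [hR.2, hθ.2] with ω h h' using h.trans h'⟩

theorem IsStoppingTimeIn.memTS_zero (hθ : IsStoppingTimeIn ℱ T θ) :
    MemTS ℱ μ T (fun _ => 0) θ :=
  ⟨hθ, ae_of_all _ fun ω => (hθ.2 ω).1⟩

open Classical in
/-- `θ` on `A` and `θ'` off `A`. Taking the maximum with `R` makes it `≥ R` everywhere, which the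
stopping-time property needs since `θ, θ' ≥ R` holds only a.s. -/
noncomputable def pasteStoppingTime (R : Ω → ℝ) (A : Set Ω) (θ θ' : Ω → ℝ) : Ω → ℝ :=
  fun ω => max (R ω) (A.piecewise θ θ' ω)

theorem memTS_pasteStoppingTime (hR : IsStoppingTimeIn ℱ T R) (hθ : IsStoppingTimeIn ℱ T θ)
    (hθ' : IsStoppingTimeIn ℱ T θ') {A : Set Ω} (hA : MeasurableSet[hR.1.measurableSpace] A) :
    MemTS ℱ μ T R (pasteStoppingTime R A θ θ') := by
  classical
  refine ⟨⟨fun t => ?_, fun ω => ?_⟩, ae_of_all _ fun ω => le_max_left _ _⟩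
  · have h_eq : {ω | ((pasteStoppingTime R A θ θ' ω : ℝ) : WithTop ℝ) ≤ t} =
        A ∩ {ω | (R ω : WithTop ℝ) ≤ t} ∩ {ω | (θ ω : WithTop ℝ) ≤ t} ∪
          Aᶜ ∩ {ω | (R ω : WithTop ℝ) ≤ t} ∩ {ω | (θ' ω : WithTop ℝ) ≤ t} := by
      ext ω
      by_cases h : ω ∈ A <;> simp [pasteStoppingTime, h]
    rw [h_eq]
    exact ((((hR.1.measurableSet A).1 hA).2 t).inter (hθ.1 t)).union
      ((((hR.1.measurableSet Aᶜ).1 hA.compl).2 t).inter (hθ'.1 t))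
  · refine ⟨le_max_of_le_left (hR.2 ω).1, max_le (hR.2 ω).2 ?_⟩
    by_cases h : ω ∈ A
    · simpa [h] using (hθ.2 ω).2
    · simpa [h] using (hθ'.2 ω).2

open Classical in
theorem Admissible.apply_pasteStoppingTime_ae_eq {φ : (Ω → ℝ) → Ω → ℝ}
    (hφ : Admissible ℱ μ T φ) (hR : IsStoppingTimeIn ℱ T R) (hθ : MemTS ℱ μ T R θ)
    (hθ' : MemTS ℱ μ T R θ') {A : Set Ω} (hA : MeasurableSet[hR.1.measurableSpace] A) :
    φ (pasteStoppingTime R A θ θ') =ᵐ[μ] A.piecewise (φ θ) (φ θ') := by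
  have hpaste := (memTS_pasteStoppingTime (μ := μ) hR hθ.1 hθ'.1 hA).1
  filter_upwards [hφ.2 _ _ hpaste hθ.1, hφ.2 _ _ hpaste hθ'.1, hθ.2, hθ'.2]
    with ω h h' hRθ hRθ'
  by_cases hω : ω ∈ A
  · simpa [hω] using h (by simp [pasteStoppingTime, hω, hRθ])
  · simpa [hω] using h' (by simp [pasteStoppingTime, hω, hRθ'])

theorem Admissible.exists_condExp_ae_eq_sup {φ : (Ω → ℝ) → Ω → ℝ}
    (hφ : Admissible ℱ μ T φ) (hR : IsStoppingTimeIn ℱ T R) (hθ : MemTS ℱ μ T R θ)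
    (hθ' : MemTS ℱ μ T R θ') :
    ∃ η, MemTS ℱ μ T R η ∧ μ[φ η | hR.1.measurableSpace] =ᵐ[μ]
      μ[φ θ | hR.1.measurableSpace] ⊔ μ[φ θ' | hR.1.measurableSpace] := by
  classical
  have h_nonneg : ∀ {η}, MemTS ℱ μ T R η → 0 ≤ᵐ[μ] μ[φ η | hR.1.measurableSpace] :=
    fun hη => condExp_nonneg (ae_of_all _ (hφ.1 _ hη.1).2)
  by_cases hi : Integrable (φ θ) μ
  swap
  · refine ⟨θ', hθ', ?_⟩
    filter_upwards [h_nonneg hθ'] with ω hω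
    simpa [condExp_of_not_integrable hi] using hω
  by_cases hi' : Integrable (φ θ') μ
  swap
  · refine ⟨θ, hθ, ?_⟩
    filter_upwards [h_nonneg hθ] with ω hω
    simpa [condExp_of_not_integrable hi'] using hω
  set A := {ω | μ[φ θ | hR.1.measurableSpace] ω ≤ μ[φ θ' | hR.1.measurableSpace] ω}
  have hA : MeasurableSet[hR.1.measurableSpace] A :=
    measurableSet_le stronglyMeasurable_condExp.measurable stronglyMeasurable_condExp.measurable
  refine ⟨pasteStoppingTime R A θ' θ, memTS_pasteStoppingTime hR hθ'.1 hθ.1 hA, ?_⟩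
  filter_upwards [condExp_congr_ae (m := hR.1.measurableSpace)
      (hφ.apply_pasteStoppingTime_ae_eq hR hθ' hθ hA),
    condExp_piecewise hR.1.measurableSpace_le hA hi' hi] with ω h_paste h_piecewise
  rw [h_paste, h_piecewise]
  by_cases hω : ω ∈ A
  · rw [Set.piecewise_eq_of_mem _ _ _ hω, Pi.sup_apply, sup_eq_right.2 hω]
  · rw [Set.piecewise_eq_of_notMem _ _ _ hω, Pi.sup_apply, sup_eq_left.2 (le_of_not_ge hω)]

end StoppingTimes

section ValueFamily

variable {m : MeasurableSpace Ω} {ℱ : Filtration ℝ m} {μ : Measure Ω} {T : ℝ}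
  {φ v : (Ω → ℝ) → Ω → ℝ} {R S θ : Ω → ℝ}

theorem IsValueFam.exists_seq_condExp_tendsto [IsFiniteMeasure μ] (hφ : Admissible ℱ μ T φ)
    (hv : IsValueFam ℱ μ T φ v) (hR : IsStoppingTimeIn ℱ T R) :
    ∃ θ : ℕ → Ω → ℝ, (∀ n, MemTS ℱ μ T R (θ n)) ∧
      (∀ᵐ ω ∂μ, Monotone fun n => μ[φ (θ n) | hR.1.measurableSpace] ω) ∧
      ∀ᵐ ω ∂μ, Tendsto (fun n => μ[φ (θ n) | hR.1.measurableSpace] ω) atTop (𝓝 (v R ω)) := by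
  obtain ⟨f, hf_mem, hf_mono, hf_lim⟩ := (hv R hR).2.exists_seq_tendsto
    ⟨_, R, MemTS.refl hR, rfl⟩
    (by rintro _ ⟨θ, -, rfl⟩; exact integrable_condExp.1)
    (by
      rintro _ ⟨θ, hθ, rfl⟩ _ ⟨θ', hθ', rfl⟩
      obtain ⟨η, hη, h_eq⟩ := hφ.exists_condExp_ae_eq_sup hR hθ hθ'
      exact ⟨_, ⟨η, hη, rfl⟩, h_eq⟩)
  choose θ hθ hf_eq using hf_mem
  obtain rfl : f = fun n => μ[φ (θ n) | hR.1.measurableSpace] := funext hf_eq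
  exact ⟨θ, hθ, hf_mono, hf_lim⟩

theorem IsValueFam.integral_reward_le [IsFiniteMeasure μ] (hv : IsValueFam ℱ μ T φ v)
    (hS : IsStoppingTimeIn ℱ T S) (hvS : Integrable (v S) μ) (hθ : MemTS ℱ μ T S θ) :
    ∫ ω, φ θ ω ∂μ ≤ ∫ ω, v S ω ∂μ := by
  rw [← integral_condExp hS.1.measurableSpace_le]
  exact integral_mono_ae integrable_condExp hvS ((hv S hS).2.1 _ ⟨θ, hθ, rfl⟩)

theorem IsValueFam.integrable_zero [IsProbabilityMeasure μ] (hF0 : TrivialF0 ℱ μ)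
    (hv : IsValueFam ℱ μ T φ v) (h0 : IsStoppingTimeIn ℱ T fun _ => 0) :
    Integrable (v fun _ => 0) μ := by
  have h_meas := (hv _ h0).1
  rw [IsStoppingTime.measurableSpace_const] at h_meas
  obtain ⟨c, hc⟩ := exists_ae_eq_const_of_measurable_of_trivial (ℱ.le 0) hF0 h_meas
  exact (integrable_const c).congr hc.symm

theorem IsValueFam.integrable [IsProbabilityMeasure μ] (hF0 : TrivialF0 ℱ μ)
    (hφ : Admissible ℱ μ T φ) (hv : IsValueFam ℱ μ T φ v) (hR : IsStoppingTimeIn ℱ T R) :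
    Integrable (v R) μ := by
  obtain ⟨ω⟩ := nonempty_of_isProbabilityMeasure μ
  have h0 : IsStoppingTimeIn ℱ T fun _ => 0 :=
    ⟨isStoppingTime_const ℱ 0, fun _ => ⟨le_rfl, (hR.2 ω).1.trans (hR.2 ω).2⟩⟩
  obtain ⟨θ, hθ, -, h_lim⟩ := hv.exists_seq_condExp_tendsto hφ hR
  refine integrable_of_tendsto_of_integral_le (C := ∫ ω, v (fun _ => 0) ω ∂μ)
    (fun n => integrable_condExp)
    (fun n => condExp_nonneg (ae_of_all _ (hφ.1 _ (hθ n).1).2)) h_lim fun n => ?_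
  rw [integral_condExp hR.1.measurableSpace_le]
  exact hv.integral_reward_le h0 (hv.integrable_zero hF0 h0) (hθ n).1.memTS_zero

theorem IsValueFam.integral_le_of_memTS [IsProbabilityMeasure μ] (hF0 : TrivialF0 ℱ μ)
    (hφ : Admissible ℱ μ T φ) (hv : IsValueFam ℱ μ T φ v) (hS : IsStoppingTimeIn ℱ T S)
    (hθ : MemTS ℱ μ T S θ) : ∫ ω, v θ ω ∂μ ≤ ∫ ω, v S ω ∂μ := by
  obtain ⟨η, hη, h_mono, h_lim⟩ := hv.exists_seq_condExp_tendsto hφ hθ.1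
  refine le_of_tendsto' (integral_tendsto_of_tendsto_of_monotone (fun n => integrable_condExp)
    (hv.integrable hF0 hφ hθ.1) h_mono h_lim) fun n => ?_
  rw [integral_condExp hθ.1.1.measurableSpace_le]
  exact hv.integral_reward_le hS (hv.integrable hF0 hφ hS) (hθ.trans (hη n))

theorem IsValueFam.reward_ae_le [IsFiniteMeasure μ] (hφ : Admissible ℱ μ T φ)
    (hv : IsValueFam ℱ μ T φ v) (hθ : IsStoppingTimeIn ℱ T θ) (hint : Integrable (φ θ) μ) :
    φ θ ≤ᵐ[μ] v θ := by
  have h := (hv θ hθ).2.1 _ ⟨θ, MemTS.refl hθ, rfl⟩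
  rwa [condExp_of_stronglyMeasurable hθ.1.measurableSpace_le
    (hφ.1 θ hθ).1.stronglyMeasurable hint] at h

end ValueFamily

theorem optimality_criterium_general {m : MeasurableSpace Ω}
    (ℱ : Filtration ℝ m) (μ : Measure Ω) [IsProbabilityMeasure μ]
    (T : ℝ) (hF0 : TrivialF0 ℱ μ)
    (φ : (Ω → ℝ) → Ω → ℝ) (hφ : Admissible ℱ μ T φ)
    (v : (Ω → ℝ) → Ω → ℝ) (hv : IsValueFam ℱ μ T φ v)
    (S θs : Ω → ℝ) (hS : IsStoppingTimeIn ℱ T S) (hθs : MemTS ℱ μ T S θs)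
    (hint : Integrable (φ θs) μ) :
    ((v S =ᵐ[μ] μ[φ θs | hS.1.measurableSpace]) ↔
      ((v θs =ᵐ[μ] φ θs) ∧ ∫ ω, v S ω ∂μ = ∫ ω, v θs ω ∂μ)) ∧
    ((v S =ᵐ[μ] μ[φ θs | hS.1.measurableSpace]) ↔
      ∫ ω, v S ω ∂μ = ∫ ω, φ θs ω ∂μ) := by
  have hvS := hv.integrable hF0 hφ hS
  have hvθ := hv.integrable hF0 hφ hθs.1
  have hφ_le := hv.reward_ae_le hφ hθs.1 hint
  have h_super := hv.integral_le_of_memTS hF0 hφ hS hθs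
  have h_iff : v S =ᵐ[μ] μ[φ θs | hS.1.measurableSpace] ↔ ∫ ω, v S ω ∂μ = ∫ ω, φ θs ω ∂μ := by
    rw [← integral_condExp (f := φ θs) hS.1.measurableSpace_le, eq_comm, eventuallyEq_comm]
    exact (integral_eq_iff_of_ae_le integrable_condExp hvS
      ((hv S hS).2.1 _ ⟨θs, hθs, rfl⟩)).symm
  refine ⟨⟨fun h => ?_, fun h => h_iff.2 (h.2.trans (integral_congr_ae h.1))⟩, h_iff⟩
  have h_eq : ∫ ω, φ θs ω ∂μ = ∫ ω, v θs ω ∂μ :=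
    le_antisymm (integral_mono_ae hint hvθ hφ_le) (h_super.trans (h_iff.1 h).le)
  exact ⟨((integral_eq_iff_of_ae_le hint hvθ hφ_le).1 h_eq).symm, (h_iff.1 h).trans h_eq⟩

/-- **Optimality criterium (Proposition 1.4).** For `θ* ∈ T_S` with `E[φ(θ*)] < ∞`,
the three assertions (1) `v(S) = E[φ(θ*)|F_S]` a.s.; (2) `v(θ*) = φ(θ*)` a.s. and
`E[v(S)] = E[v(θ*)]`; (3) `E[v(S)] = E[φ(θ*)]` are equivalent. -/
theorem optimality_criterium {m : MeasurableSpace Ω}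
    (ℱ : Filtration ℝ m) (μ : Measure Ω) [IsProbabilityMeasure μ]
    (T : ℝ) (hT : 0 < T) (hF0 : TrivialF0 ℱ μ)
    (φ : (Ω → ℝ) → Ω → ℝ) (hφ : Admissible ℱ μ T φ)
    (v : (Ω → ℝ) → Ω → ℝ) (hv : IsValueFam ℱ μ T φ v)
    (S θs : Ω → ℝ) (hS : IsStoppingTimeIn ℱ T S) (hθs : MemTS ℱ μ T S θs)
    (hint : Integrable (φ θs) μ) :
    ((v S =ᵐ[μ] μ[φ θs | hS.1.measurableSpace]) ↔
      ((v θs =ᵐ[μ] φ θs) ∧ ∫ ω, v S ω ∂μ = ∫ ω, v θs ω ∂μ)) ∧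
    ((v S =ᵐ[μ] μ[φ θs | hS.1.measurableSpace]) ↔
      ∫ ω, v S ω ∂μ = ∫ ω, φ θs ω ∂μ) :=
  optimality_criterium_general ℱ μ T hF0 φ hφ v hv S θs hS hθs hint
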